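/- arXiv:math/0211256 — 8 statements merged into one kernel-verified Lean document; each statement's English description precedes it below -/
import Mathlib

section
/- Let Φ₁, Φ₂, Φ₃ ∈ [0, π/2] and r₁, r₂, r₃ > 0 be real numbers. Define ℓ₁ = √(r₂² + r₃² + 2r₂r₃cos Φ₁), ℓ₂ = √(r₃² + r₁² + 2r₃r₁cos Φ₂), ℓ₃ = √(r₁² + r₂² + 2r₁r₂cos Φ₃). Then ℓ₁, ℓ₂, ℓ₃ satisfy the strict triangle inequalities: ℓ₁ < ℓ₂ + ℓ₃, ℓ₂ < ℓ₃ + ℓ₁, and ℓ₃ < ℓ₁ + ℓ₂. -/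
open Real

lemma aux_le (a b c : ℝ) (ha : 0 < a) (hb : 0 < b) (hc0 : 0 ≤ c) (hc1 : c ≤ 1) :
    Real.sqrt (a ^ 2 + b ^ 2 + 2 * a * b * c) ≤ a + b := by
  have h : a ^ 2 + b ^ 2 + 2 * a * b * c ≤ (a + b) ^ 2 := by nlinarith [mul_nonneg (mul_pos ha hb).le (sub_nonneg.mpr hc1)]
  calc Real.sqrt (a ^ 2 + b ^ 2 + 2 * a * b * c) ≤ Real.sqrt ((a + b) ^ 2) :=
        Real.sqrt_le_sqrt h
    _ = a + b := by rw [Real.sqrt_sq (by linarith)]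

lemma aux_gt (a b c : ℝ) (ha : 0 < a) (hb : 0 < b) (hc0 : 0 ≤ c) :
    a < Real.sqrt (a ^ 2 + b ^ 2 + 2 * a * b * c) := by
  have h : a ^ 2 < a ^ 2 + b ^ 2 + 2 * a * b * c := by nlinarith [pow_pos hb 2, mul_nonneg (mul_nonneg ha.le hb.le) hc0]
  calc a = Real.sqrt (a ^ 2) := (Real.sqrt_sq ha.le).symm
    _ < Real.sqrt (a ^ 2 + b ^ 2 + 2 * a * b * c) := Real.sqrt_lt_sqrt (by positivity) h

lemma aux_gt' (a b c : ℝ) (ha : 0 < a) (hb : 0 < b) (hc0 : 0 ≤ c) :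
    b < Real.sqrt (a ^ 2 + b ^ 2 + 2 * a * b * c) := by
  have := aux_gt b a c hb ha hc0
  calc b < Real.sqrt (b ^ 2 + a ^ 2 + 2 * b * a * c) := this
    _ = _ := by ring_nf

/-- Euclidean case of Thurston's Lemma 2.1: the distances between the centers of three
circles of radii `r₁, r₂, r₃` meeting at exterior angles `Φ₁, Φ₂, Φ₃ ∈ [0, π/2]`
satisfy the strict triangle inequalities. -/
theorem euclidean_circle_packing_triangle_ineq
    (Φ₁ Φ₂ Φ₃ r₁ r₂ r₃ : ℝ)
    (hΦ₁ : Φ₁ ∈ Set.Icc 0 (π / 2)) (hΦ₂ : Φ₂ ∈ Set.Icc 0 (π / 2))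
    (hΦ₃ : Φ₃ ∈ Set.Icc 0 (π / 2))
    (hr₁ : 0 < r₁) (hr₂ : 0 < r₂) (hr₃ : 0 < r₃)
    (ℓ₁ ℓ₂ ℓ₃ : ℝ)
    (hℓ₁ : ℓ₁ = Real.sqrt (r₂ ^ 2 + r₃ ^ 2 + 2 * r₂ * r₃ * Real.cos Φ₁))
    (hℓ₂ : ℓ₂ = Real.sqrt (r₃ ^ 2 + r₁ ^ 2 + 2 * r₃ * r₁ * Real.cos Φ₂))
    (hℓ₃ : ℓ₃ = Real.sqrt (r₁ ^ 2 + r₂ ^ 2 + 2 * r₁ * r₂ * Real.cos Φ₃)) :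
    ℓ₁ < ℓ₂ + ℓ₃ ∧ ℓ₂ < ℓ₃ + ℓ₁ ∧ ℓ₃ < ℓ₁ + ℓ₂ := by
  have hc₁0 : 0 ≤ Real.cos Φ₁ := Real.cos_nonneg_of_mem_Icc ⟨by linarith [hΦ₁.1, Real.pi_pos], hΦ₁.2⟩
  have hc₂0 : 0 ≤ Real.cos Φ₂ := Real.cos_nonneg_of_mem_Icc ⟨by linarith [hΦ₂.1, Real.pi_pos], hΦ₂.2⟩
  have hc₃0 : 0 ≤ Real.cos Φ₃ := Real.cos_nonneg_of_mem_Icc ⟨by linarith [hΦ₃.1, Real.pi_pos], hΦ₃.2⟩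
  have h₁le : ℓ₁ ≤ r₂ + r₃ := hℓ₁ ▸ aux_le r₂ r₃ _ hr₂ hr₃ hc₁0 (Real.cos_le_one _)
  have h₂le : ℓ₂ ≤ r₃ + r₁ := hℓ₂ ▸ aux_le r₃ r₁ _ hr₃ hr₁ hc₂0 (Real.cos_le_one _)
  have h₃le : ℓ₃ ≤ r₁ + r₂ := hℓ₃ ▸ aux_le r₁ r₂ _ hr₁ hr₂ hc₃0 (Real.cos_le_one _)
  have h₁a : r₂ < ℓ₁ := hℓ₁ ▸ aux_gt r₂ r₃ _ hr₂ hr₃ hc₁0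
  have h₁b : r₃ < ℓ₁ := hℓ₁ ▸ aux_gt' r₂ r₃ _ hr₂ hr₃ hc₁0
  have h₂a : r₃ < ℓ₂ := hℓ₂ ▸ aux_gt r₃ r₁ _ hr₃ hr₁ hc₂0
  have h₂b : r₁ < ℓ₂ := hℓ₂ ▸ aux_gt' r₃ r₁ _ hr₃ hr₁ hc₂0
  have h₃a : r₁ < ℓ₃ := hℓ₃ ▸ aux_gt r₁ r₂ _ hr₁ hr₂ hc₃0
  have h₃b : r₂ < ℓ₃ := hℓ₃ ▸ aux_gt' r₁ r₂ _ hr₁ hr₂ hc₃0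
  exact ⟨by linarith, by linarith, by linarith⟩
end

section
/- Let Φ₁, Φ₂, Φ₃ ∈ [0, π/2] and r₁, r₂, r₃ > 0 be real numbers. Define ℓ₁ = arcosh(cosh r₂ cosh r₃ + sinh r₂ sinh r₃ cos Φ₁), ℓ₂ = arcosh(cosh r₃ cosh r₁ + sinh r₃ sinh r₁ cos Φ₂), ℓ₃ = arcosh(cosh r₁ cosh r₂ + sinh r₁ sinh r₂ cos Φ₃). Then ℓ₁, ℓ₂, ℓ₃ satisfy the strict triangle inequalities: ℓ₁ < ℓ₂ + ℓ₃, ℓ₂ < ℓ₃ + ℓ₁, and ℓ₃ < ℓ₁ + ℓ₂. -/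
open Real

/-- The inverse hyperbolic cosine (on `[1, ∞)`). -/
noncomputable def arcosh (x : ℝ) : ℝ := Real.log (x + Real.sqrt (x ^ 2 - 1))

/-!
Write `d(r, s, Φ)` for the center distance given by the hyperbolic law of cosines. Since
`0 ≤ cos Φ ≤ 1`, its hyperbolic cosine lies strictly above `cosh r` and `cosh s` and at most at
`cosh (r + s)`, so `max r s < d(r, s, Φ) ≤ r + s`. Then, e.g., `ℓ₁ ≤ r₂ + r₃ < ℓ₃ + ℓ₂`.
-/

lemma arcosh_eq_real_arcosh : _root_.arcosh = Real.arcosh := rfl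

namespace Real

lemma lt_arcosh_of_cosh_lt {r x : ℝ} (hr : 0 ≤ r) (h : cosh r < x) : r < arcosh x := by
  simpa only [arcosh_cosh hr] using
    (arcosh_lt_arcosh (cosh_pos r) ((cosh_pos r).trans h)).2 h

lemma arcosh_le_of_le_cosh {r x : ℝ} (hr : 0 ≤ r) (hx : 0 < x) (h : x ≤ cosh r) :
    arcosh x ≤ r := by
  simpa only [arcosh_cosh hr] using (arcosh_le_arcosh hx (cosh_pos r)).2 h

end Real

/-- The distance between the centers of two hyperbolic circles of radii `r`, `s` meeting at
exterior angle `Φ`, by the hyperbolic law of cosines. -/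
noncomputable def centerDist (r s Φ : ℝ) : ℝ :=
  Real.arcosh (cosh r * cosh s + sinh r * sinh s * cos Φ)

lemma centerDist_comm (r s Φ : ℝ) : centerDist r s Φ = centerDist s r Φ := by
  rw [centerDist, centerDist, mul_comm (cosh r), mul_comm (sinh r)]

lemma lt_centerDist {r s Φ : ℝ} (hr : 0 ≤ r) (hs : 0 < s) (hΦ : 0 ≤ cos Φ) :
    r < centerDist r s Φ := by
  refine Real.lt_arcosh_of_cosh_lt hr ?_
  have hcosh : 1 < cosh s := one_lt_cosh.2 hs.ne'
  have hsinh : 0 ≤ sinh r * sinh s * cos Φ := by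
    have := sinh_nonneg_iff.2 hr
    have := sinh_nonneg_iff.2 hs.le
    positivity
  nlinarith [cosh_pos r]

lemma max_lt_centerDist {r s Φ : ℝ} (hr : 0 < r) (hs : 0 < s) (hΦ : 0 ≤ cos Φ) :
    max r s < centerDist r s Φ :=
  max_lt (lt_centerDist hr.le hs hΦ) (centerDist_comm s r Φ ▸ lt_centerDist hs.le hr hΦ)

lemma centerDist_le_add {r s : ℝ} (Φ : ℝ) (hr : 0 ≤ r) (hs : 0 ≤ s) :
    centerDist r s Φ ≤ r + s := by
  have hsinh : 0 ≤ sinh r * sinh s :=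
    mul_nonneg (sinh_nonneg_iff.2 hr) (sinh_nonneg_iff.2 hs)
  refine Real.arcosh_le_of_le_cosh (add_nonneg hr hs) ?_ ?_
  · -- the argument is at least `cosh (r - s)`, attained at `cos Φ = -1`
    have := cosh_pos (r - s)
    rw [cosh_sub] at this
    nlinarith [neg_one_le_cos Φ]
  · rw [cosh_add]
    nlinarith [cos_le_one Φ]

/-- Hyperbolic case of Thurston's Lemma 2.1: the hyperbolic distances between the centers
of three hyperbolic circles of radii `r₁, r₂, r₃` meeting at exterior angles
`Φ₁, Φ₂, Φ₃ ∈ [0, π/2]` satisfy the strict triangle inequalities. -/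
theorem hyperbolic_circle_packing_triangle_ineq
    (Φ₁ Φ₂ Φ₃ r₁ r₂ r₃ : ℝ)
    (hΦ₁ : Φ₁ ∈ Set.Icc 0 (π / 2)) (hΦ₂ : Φ₂ ∈ Set.Icc 0 (π / 2))
    (hΦ₃ : Φ₃ ∈ Set.Icc 0 (π / 2))
    (hr₁ : 0 < r₁) (hr₂ : 0 < r₂) (hr₃ : 0 < r₃)
    (ℓ₁ ℓ₂ ℓ₃ : ℝ)
    (hℓ₁ : ℓ₁ = _root_.arcosh (Real.cosh r₂ * Real.cosh r₃ + Real.sinh r₂ * Real.sinh r₃ * Real.cos Φ₁))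
    (hℓ₂ : ℓ₂ = _root_.arcosh (Real.cosh r₃ * Real.cosh r₁ + Real.sinh r₃ * Real.sinh r₁ * Real.cos Φ₂))
    (hℓ₃ : ℓ₃ = _root_.arcosh (Real.cosh r₁ * Real.cosh r₂ + Real.sinh r₁ * Real.sinh r₂ * Real.cos Φ₃)) :
    ℓ₁ < ℓ₂ + ℓ₃ ∧ ℓ₂ < ℓ₃ + ℓ₁ ∧ ℓ₃ < ℓ₁ + ℓ₂ := by
  have cos_nonneg {Φ : ℝ} (hΦ : Φ ∈ Set.Icc 0 (π / 2)) : 0 ≤ cos Φ :=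
    cos_nonneg_of_mem_Icc ⟨by linarith [hΦ.1, pi_pos], hΦ.2⟩
  rw [arcosh_eq_real_arcosh] at hℓ₁ hℓ₂ hℓ₃
  change ℓ₁ = centerDist r₂ r₃ Φ₁ at hℓ₁
  change ℓ₂ = centerDist r₃ r₁ Φ₂ at hℓ₂
  change ℓ₃ = centerDist r₁ r₂ Φ₃ at hℓ₃
  obtain ⟨h₂₁, h₃₁⟩ := max_lt_iff.1 (max_lt_centerDist hr₂ hr₃ (cos_nonneg hΦ₁))
  obtain ⟨h₃₂, h₁₂⟩ := max_lt_iff.1 (max_lt_centerDist hr₃ hr₁ (cos_nonneg hΦ₂))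
  obtain ⟨h₁₃, h₂₃⟩ := max_lt_iff.1 (max_lt_centerDist hr₁ hr₂ (cos_nonneg hΦ₃))
  have := centerDist_le_add Φ₁ hr₂.le hr₃.le
  have := centerDist_le_add Φ₂ hr₃.le hr₁.le
  have := centerDist_le_add Φ₃ hr₁.le hr₂.le
  subst hℓ₁ hℓ₂ hℓ₃
  refine ⟨?_, ?_, ?_⟩ <;> linarith
end

section
/- Fix Φ₁, Φ₂, Φ₃ ∈ [0, π). For r₁, r₂, r₃ > 0 define ℓ₁ = √(r₂² + r₃² + 2r₂r₃cos Φ₁), ℓ₂ = √(r₃² + r₁² + 2r₃r₁cos Φ₂), ℓ₃ = √(r₁² + r₂² + 2r₁r₂cos Φ₃), and define θ₁ = arccos((ℓ₂² + ℓ₃² − ℓ₁²)/(2ℓ₂ℓ₃)), θ₂ = arccos((ℓ₃² + ℓ₁² − ℓ₂²)/(2ℓ₃ℓ₁)), θ₃ = arccos((ℓ₁² + ℓ₂² − ℓ₃²)/(2ℓ₁ℓ₂)). Suppose at the point (r₁, r₂, r₃) the lengths ℓ₁, ℓ₂, ℓ₃ satisfy the strict triangle inequalities. Then the partial derivatives satisfy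 the symmetry r₂ · ∂θ₁/∂r₂ = r₁ · ∂θ₂/∂r₁ (and similarly for the other pairs of indices). -/
/-!
Write `Lₘ = ℓₘ²`. Varying `r j` leaves `L j` fixed, and for the other two sides the law of cosines
gives `r j · ∂Lₘ/∂r j = Lₘ + (r j)² - (r n)²`, where `n` is the index other than `j` and `m`.
Differentiating `θ = arccos ((b + c - a) / (2 √b √c))` therefore turns both `r j · ∂θ i/∂r j` and
`r i · ∂θ j/∂r i` into rational expressions in the `L`'s and `r`'s over the common denominator
`√(16 · area²)`, and the two numerators agree identically. The strict triangle inequalities are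
what make `16 · area²`, and with it every `L`, positive.
-/

open Real

/-- The Euclidean distance between the centers of the circles of radii `r (i+1)` and
`r (i+2)` meeting at exterior angle `Φ i` (indices mod 3). -/
noncomputable def ellE (Φ r : Fin 3 → ℝ) (i : Fin 3) : ℝ :=
  Real.sqrt (r (i + 1) ^ 2 + r (i + 2) ^ 2 + 2 * r (i + 1) * r (i + 2) * Real.cos (Φ i))

/-- The inner angle at the `i`-th vertex of the Euclidean triangle with side lengths
`ellE Φ r`, via the Euclidean law of cosines. -/
noncomputable def thetaE (Φ r : Fin 3 → ℝ) (i : Fin 3) : ℝ :=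
  Real.arccos ((ellE Φ r (i + 1) ^ 2 + ellE Φ r (i + 2) ^ 2 - ellE Φ r i ^ 2) /
    (2 * ellE Φ r (i + 1) * ellE Φ r (i + 2)))

/-- Sixteen times the squared area of a triangle with squared side lengths `a`, `b`, `c`
(Heron's formula). -/
def heron (a b c : ℝ) : ℝ := 2 * (a * b + b * c + c * a) - (a ^ 2 + b ^ 2 + c ^ 2)

theorem heron_sq_pos {x y z : ℝ} (hxyz : x < y + z) (hyzx : y < z + x)
    (hzxy : z < x + y) : 0 < heron (x ^ 2) (y ^ 2) (z ^ 2) := by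
  have hfactor : heron (x ^ 2) (y ^ 2) (z ^ 2) =
      (x + y + z) * (y + z - x) * (z + x - y) * (x + y - z) := by
    unfold heron
    ring
  have hsum : 0 < x + y + z := by linarith
  rw [hfactor]
  exact mul_pos (mul_pos (mul_pos hsum (sub_pos.2 hxyz)) (sub_pos.2 hyzx)) (sub_pos.2 hzxy)

theorem pos_of_heron_pos {a b c : ℝ} (ha : 0 ≤ a) (hb : 0 ≤ b) (hc : 0 ≤ c)
    (h : 0 < heron a b c) : 0 < a ∧ 0 < b ∧ 0 < c := by
  unfold heron at h
  refine ⟨?_, ?_, ?_⟩ <;> nlinarith [sq_nonneg (a - b), sq_nonneg (b - c), sq_nonneg (c - a)]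

/-- The angle opposite to the side of squared length `a` in a triangle with squared side lengths
`a`, `b`, `c`. -/
noncomputable def angleOfSq (a b c : ℝ) : ℝ := arccos ((b + c - a) / (2 * √b * √c))

theorem angleOfSq_comm (a b c : ℝ) : angleOfSq a b c = angleOfSq a c b := by
  rw [angleOfSq, angleOfSq, add_comm b, mul_assoc, mul_comm √b, ← mul_assoc]

theorem hasDerivAt_angleOfSq {a b c : ℝ → ℝ} {a' b' c' x : ℝ} (ha : HasDerivAt a a' x)
    (hb : HasDerivAt b b' x) (hc : HasDerivAt c c' x) (hb₀ : 0 < b x) (hc₀ : 0 < c x)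
    (hH : 0 < heron (a x) (b x) (c x)) :
    HasDerivAt (fun t => angleOfSq (a t) (b t) (c t))
      ((a' - (a x + b x - c x) * b' / (2 * b x) - (a x + c x - b x) * c' / (2 * c x)) /
        √(heron (a x) (b x) (c x))) x := by
  set p := √(b x)
  set q := √(c x)
  have hp : 0 < p := sqrt_pos.2 hb₀
  have hq : 0 < q := sqrt_pos.2 hc₀
  have hpb : p ^ 2 = b x := sq_sqrt hb₀.le
  have hqc : q ^ 2 = c x := sq_sqrt hc₀.le
  have hs : 0 < √(heron (a x) (b x) (c x)) := sqrt_pos.2 hH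
  set g := (b x + c x - a x) / (2 * p * q)
  -- `g` is the cosine of the angle, and `√(heron) / (2 p q)` its sine
  have hsin : 1 - g ^ 2 = (√(heron (a x) (b x) (c x)) / (2 * p * q)) ^ 2 := by
    rw [div_pow, div_pow, sq_sqrt hH.le]
    field_simp
    rw [← hpb, ← hqc]
    unfold heron
    ring
  have hg : |g| < 1 := by
    rw [← sq_lt_one_iff_abs_lt_one]
    have : 0 < (√(heron (a x) (b x) (c x)) / (2 * p * q)) ^ 2 := by positivity
    linarith
  have hden : HasDerivAt (fun t => 2 * √(b t) * √(c t))
      (2 * (b' / (2 * p)) * q + 2 * p * (c' / (2 * q))) x :=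
    ((hb.sqrt hb₀.ne').const_mul 2).mul (hc.sqrt hc₀.ne')
  refine ((hasDerivAt_arccos (abs_lt.1 hg).1.ne' (abs_lt.1 hg).2.ne).comp x
    (((hb.add hc).sub ha).div hden (by positivity))).congr_deriv ?_
  rw [hsin, sqrt_sq (by positivity)]
  simp only [Pi.add_apply, Pi.sub_apply]
  field_simp
  rw [← hpb, ← hqc, sqrt_sq hp.le, sqrt_sq hq.le]
  ring

/-- The squared distance between the centers of two circles of radii `x` and `y` meeting at
exterior angle `φ`. -/
noncomputable def centerDistSq (x y φ : ℝ) : ℝ := x ^ 2 + y ^ 2 + 2 * x * y * cos φ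

theorem centerDistSq_comm (x y φ : ℝ) : centerDistSq x y φ = centerDistSq y x φ := by
  unfold centerDistSq
  ring

theorem centerDistSq_nonneg (x y φ : ℝ) : 0 ≤ centerDistSq x y φ := by
  unfold centerDistSq
  nlinarith [mul_nonneg (sq_nonneg (x + y)) (by linarith [neg_one_le_cos φ] : 0 ≤ 1 + cos φ),
    mul_nonneg (sq_nonneg (x - y)) (by linarith [cos_le_one φ] : 0 ≤ 1 - cos φ)]

theorem hasDerivAt_centerDistSq (x y φ : ℝ) :
    HasDerivAt (fun x => centerDistSq x y φ) (2 * x + 2 * y * cos φ) x := by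
  have h := ((hasDerivAt_pow 2 x).add_const (y ^ 2)).add
    ((((hasDerivAt_id x).const_mul 2).mul_const y).mul_const (cos φ))
  refine (h.congr_deriv ?_).congr_of_eventuallyEq (.of_forall fun t => ?_)
  · simp
  · simp [centerDistSq]

theorem mul_deriv_angleOfSq_centerDistSq {ρ s t φ ψ B : ℝ} (hB : 0 < B)
    (hC : 0 < centerDistSq ρ t ψ) (hH : 0 < heron (centerDistSq ρ s φ) B (centerDistSq ρ t ψ)) :
    ρ * deriv (fun x => angleOfSq (centerDistSq x s φ) B (centerDistSq x t ψ)) ρ =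
      (centerDistSq ρ s φ + ρ ^ 2 - s ^ 2 - (centerDistSq ρ s φ + centerDistSq ρ t ψ - B) *
        (centerDistSq ρ t ψ + ρ ^ 2 - t ^ 2) / (2 * centerDistSq ρ t ψ)) /
        √(heron (centerDistSq ρ s φ) B (centerDistSq ρ t ψ)) := by
  rw [(hasDerivAt_angleOfSq (hasDerivAt_centerDistSq ρ s φ) (hasDerivAt_const ρ B)
    (hasDerivAt_centerDistSq ρ t ψ) hB hC hH).deriv]
  field_simp
  unfold centerDistSq
  ring

theorem radius_mul_deriv_angleOfSq_symm (r₁ r₂ r₃ φ₁ φ₂ φ₃ : ℝ)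
    (hH : 0 < heron (centerDistSq r₂ r₃ φ₁) (centerDistSq r₃ r₁ φ₂) (centerDistSq r₁ r₂ φ₃)) :
    r₂ * deriv (fun x => angleOfSq (centerDistSq x r₃ φ₁) (centerDistSq r₃ r₁ φ₂)
      (centerDistSq r₁ x φ₃)) r₂ =
    r₁ * deriv (fun x => angleOfSq (centerDistSq r₃ x φ₂) (centerDistSq x r₂ φ₃)
      (centerDistSq r₂ r₃ φ₁)) r₁ := by
  obtain ⟨h₁, h₂, h₃⟩ := pos_of_heron_pos (centerDistSq_nonneg _ _ _)
    (centerDistSq_nonneg _ _ _) (centerDistSq_nonneg _ _ _) hH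
  have hθ₁ : (fun x => angleOfSq (centerDistSq x r₃ φ₁) (centerDistSq r₃ r₁ φ₂)
      (centerDistSq r₁ x φ₃)) = fun x => angleOfSq (centerDistSq x r₃ φ₁)
      (centerDistSq r₃ r₁ φ₂) (centerDistSq x r₁ φ₃) :=
    funext fun x => by rw [centerDistSq_comm r₁]
  have hθ₂ : (fun x => angleOfSq (centerDistSq r₃ x φ₂) (centerDistSq x r₂ φ₃)
      (centerDistSq r₂ r₃ φ₁)) = fun x => angleOfSq (centerDistSq x r₃ φ₂)
      (centerDistSq r₂ r₃ φ₁) (centerDistSq x r₂ φ₃) :=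
    funext fun x => by rw [angleOfSq_comm, centerDistSq_comm r₃]
  have hswap : heron (centerDistSq r₃ r₁ φ₂) (centerDistSq r₂ r₃ φ₁) (centerDistSq r₁ r₂ φ₃) =
      heron (centerDistSq r₂ r₃ φ₁) (centerDistSq r₃ r₁ φ₂) (centerDistSq r₁ r₂ φ₃) := by
    unfold heron
    ring
  rw [hθ₁, hθ₂, mul_deriv_angleOfSq_centerDistSq h₂ (by rwa [centerDistSq_comm])
      (by rwa [centerDistSq_comm r₂ r₁]),
    mul_deriv_angleOfSq_centerDistSq h₁ h₃ (by rwa [centerDistSq_comm r₁ r₃, hswap]),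
    centerDistSq_comm r₂ r₁, centerDistSq_comm r₁ r₃, hswap]
  -- an identity of rational functions in which the three squared sides are free variables
  congr 1
  field_simp
  ring

theorem fin3_add_one_add_one (i : Fin 3) : i + 1 + 1 = i + 2 := by revert i; decide

theorem fin3_add_one_add_two (i : Fin 3) : i + 1 + 2 = i := by revert i; decide

theorem fin3_add_two_add_one (i : Fin 3) : i + 2 + 1 = i := by revert i; decide

theorem fin3_add_two_add_two (i : Fin 3) : i + 2 + 2 = i + 1 := by revert i; decide

theorem fin3_eq_add_one_or_eq_add_one_of_ne {i j : Fin 3} (h : i ≠ j) :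
    j = i + 1 ∨ i = j + 1 := by
  revert i j; decide

noncomputable def sideSq (Φ r : Fin 3 → ℝ) (i : Fin 3) : ℝ :=
  centerDistSq (r (i + 1)) (r (i + 2)) (Φ i)

theorem ellE_sq (Φ r : Fin 3 → ℝ) (i : Fin 3) : ellE Φ r i ^ 2 = sideSq Φ r i :=
  sq_sqrt (centerDistSq_nonneg _ _ _)

theorem thetaE_eq_angleOfSq (Φ r : Fin 3 → ℝ) (i : Fin 3) :
    thetaE Φ r i = angleOfSq (sideSq Φ r i) (sideSq Φ r (i + 1)) (sideSq Φ r (i + 2)) := by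
  rw [thetaE, ellE_sq, ellE_sq, ellE_sq]
  rfl

theorem heron_sideSq_pos {Φ r : Fin 3 → ℝ}
    (htri : ∀ i, ellE Φ r i < ellE Φ r (i + 1) + ellE Φ r (i + 2)) (i : Fin 3) :
    0 < heron (sideSq Φ r i) (sideSq Φ r (i + 1)) (sideSq Φ r (i + 2)) := by
  have h₁ := htri (i + 1)
  have h₂ := htri (i + 2)
  rw [fin3_add_one_add_one, fin3_add_one_add_two] at h₁
  rw [fin3_add_two_add_one, fin3_add_two_add_two] at h₂
  simpa only [ellE_sq] using heron_sq_pos (htri i) h₁ h₂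

theorem mul_deriv_thetaE_succ_symm (Φ r : Fin 3 → ℝ) (i : Fin 3)
    (hH : 0 < heron (sideSq Φ r i) (sideSq Φ r (i + 1)) (sideSq Φ r (i + 2))) :
    r (i + 1) * deriv (fun x => thetaE Φ (Function.update r (i + 1) x) i) (r (i + 1)) =
      r i * deriv (fun x => thetaE Φ (Function.update r i x) (i + 1)) (r i) := by
  simp only [thetaE_eq_angleOfSq, sideSq, Function.update_apply, fin3_add_one_add_one,
    fin3_add_one_add_two, fin3_add_two_add_one, fin3_add_two_add_two] at hH ⊢
  simpa using radius_mul_deriv_angleOfSq_symm _ _ _ _ _ _ hH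

theorem euclidean_deriv_symm_general
    (Φ r : Fin 3 → ℝ)
    (htri : ∀ i, ellE Φ r i < ellE Φ r (i + 1) + ellE Φ r (i + 2)) :
    ∀ i j : Fin 3, i ≠ j →
      r j * deriv (fun x => thetaE Φ (Function.update r j x) i) (r j) =
      r i * deriv (fun x => thetaE Φ (Function.update r i x) j) (r i) := by
  intro i j hij
  obtain rfl | rfl := fin3_eq_add_one_or_eq_add_one_of_ne hij
  · exact mul_deriv_thetaE_succ_symm Φ r i (heron_sideSq_pos htri i)
  · exact (mul_deriv_thetaE_succ_symm Φ r j (heron_sideSq_pos htri j)).symm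

/-- Lemma 2.3 in the Euclidean background geometry:
`r j · ∂θ i / ∂r j = r i · ∂θ j / ∂r i` for all pairs of distinct indices `i, j`. -/
theorem euclidean_deriv_symm
    (Φ r : Fin 3 → ℝ)
    (hΦ : ∀ i, Φ i ∈ Set.Ico 0 π)
    (hr : ∀ i, 0 < r i)
    (htri : ∀ i, ellE Φ r i < ellE Φ r (i + 1) + ellE Φ r (i + 2)) :
    ∀ i j : Fin 3, i ≠ j →
      r j * deriv (fun x => thetaE Φ (Function.update r j x) i) (r j) =
      r i * deriv (fun x => thetaE Φ (Function.update r i x) j) (r i) :=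
  euclidean_deriv_symm_general Φ r htri
end

section
/- For every ε > 0 there exists L > 0 with the following property: for all Φ₁, Φ₂, Φ₃ ∈ [0, π/2] and all r₁, r₂, r₃ > 0 with r₁ > L, the angle θ₁ = arccos((cosh ℓ₂ cosh ℓ₃ − cosh ℓ₁)/(sinh ℓ₂ sinh ℓ₃)) satisfies θ₁ < ε, where ℓ₁ = arcosh(cosh r₂ cosh r₃ + sinh r₂ sinh r₃ cos Φ₁), ℓ₂ = arcosh(cosh r₃ cosh r₁ + sinh r₃ sinh r₁ cos Φ₂), ℓ₃ = arcosh(cosh r₁ cosh r₂ + sinh r₁ sinh r₂ cos Φ₃). -/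
open Real

open Filter Topology

/-!
Write `A = cosh ℓ₂`, `B = cosh ℓ₃`, `C = cosh ℓ₁`. Since `sinh ℓ < cosh ℓ`, the cosine of the
angle is at least `1 - C / (A B)`. Because the weights are non-obtuse, `A ≥ cosh r₃ cosh r₁` and
`B ≥ cosh r₁ cosh r₂`, while always `C ≤ 2 cosh r₂ cosh r₃`; hence `C / (A B) ≤ 2 / cosh² r₁`,
and the angle is at most `arccos (1 - 2 / cosh² r₁)`, which tends to `0` as `r₁ → ∞`.
-/

/-- Hyperbolic law of cosines: `cosh` of the distance between the centres of two circles of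
radii `r`, `r'` meeting at exterior angle `Φ`. -/
noncomputable def coshCenterDist (r r' Φ : ℝ) : ℝ :=
  cosh r * cosh r' + sinh r * sinh r' * cos Φ

/-- The angle between the sides `a` and `b` of a hyperbolic triangle whose third side is `c`. -/
noncomputable def vertexAngle (a b c : ℝ) : ℝ :=
  arccos ((cosh a * cosh b - cosh c) / (sinh a * sinh b))

theorem abs_sinh_le_cosh (x : ℝ) : |sinh x| ≤ cosh x := by
  rw [abs_sinh, ← cosh_abs]
  exact (sinh_lt_cosh _).le

theorem tendsto_cosh_atTop : Tendsto cosh atTop atTop := by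
  refine tendsto_atTop_mono (fun x => ?_) (tendsto_exp_atTop.atTop_div_const two_pos)
  linarith [cosh_add_sinh x, sinh_lt_cosh x]

theorem tendsto_arccos_one_sub_two_div_cosh_sq :
    Tendsto (fun r => arccos (1 - 2 / cosh r ^ 2)) atTop (𝓝 0) := by
  have h : Tendsto (fun r => 1 - 2 / cosh r ^ 2) atTop (𝓝 1) := by
    simpa using tendsto_const_nhds.sub
      (tendsto_const_nhds.div_atTop ((tendsto_pow_atTop two_ne_zero).comp tendsto_cosh_atTop))
  exact arccos_one ▸ (continuous_arccos.tendsto 1).comp h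

section coshCenterDist

variable {r r' Φ : ℝ}

theorem cosh_mul_cosh_le_coshCenterDist (hr : 0 ≤ r) (hr' : 0 ≤ r') (hΦ : 0 ≤ cos Φ) :
    cosh r * cosh r' ≤ coshCenterDist r r' Φ :=
  le_add_of_nonneg_right <|
    mul_nonneg (mul_nonneg (sinh_nonneg_iff.2 hr) (sinh_nonneg_iff.2 hr')) hΦ

theorem one_le_coshCenterDist (hr : 0 ≤ r) (hr' : 0 ≤ r') (hΦ : 0 ≤ cos Φ) :
    1 ≤ coshCenterDist r r' Φ :=
  (one_le_mul_of_one_le_of_one_le (one_le_cosh r) (one_le_cosh r')).trans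
    (cosh_mul_cosh_le_coshCenterDist hr hr' hΦ)

theorem coshCenterDist_le (r r' Φ : ℝ) : coshCenterDist r r' Φ ≤ 2 * (cosh r * cosh r') := by
  have h : sinh r * sinh r' * cos Φ ≤ cosh r * cosh r' * 1 :=
    calc sinh r * sinh r' * cos Φ ≤ |sinh r| * |sinh r'| * |cos Φ| := by
          rw [← abs_mul, ← abs_mul]; exact le_abs_self _
      _ ≤ cosh r * cosh r' * 1 := by
          gcongr
          exacts [abs_sinh_le_cosh r, abs_sinh_le_cosh r', abs_cos_le_one Φ]
  rw [coshCenterDist]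
  linarith

end coshCenterDist

theorem vertexAngle_le_arccos {a b c : ℝ} (ha : 0 < a) (hb : 0 < b)
    (hc : cosh c ≤ cosh a * cosh b) :
    vertexAngle a b c ≤ arccos (1 - cosh c / (cosh a * cosh b)) := by
  refine arccos_le_arccos ?_
  have hsa := sinh_pos_iff.2 ha
  have hsb := sinh_pos_iff.2 hb
  rw [one_sub_div (by positivity)]
  gcongr <;> exact (sinh_lt_cosh _).le

theorem vertexAngle_coshCenterDist_le {r₁ r₂ r₃ Φ₁ Φ₂ Φ₃ : ℝ}
    (hr₁ : 0 ≤ r₁) (hr₂ : 0 ≤ r₂) (hr₃ : 0 ≤ r₃)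
    (hΦ₁ : 0 ≤ cos Φ₁) (hΦ₂ : 0 ≤ cos Φ₂) (hΦ₃ : 0 ≤ cos Φ₃) (hcosh : 2 ≤ cosh r₁ ^ 2) :
    vertexAngle (Real.arcosh (coshCenterDist r₃ r₁ Φ₂)) (Real.arcosh (coshCenterDist r₁ r₂ Φ₃))
      (Real.arcosh (coshCenterDist r₂ r₃ Φ₁)) ≤ arccos (1 - 2 / cosh r₁ ^ 2) := by
  set A := coshCenterDist r₃ r₁ Φ₂
  set B := coshCenterDist r₁ r₂ Φ₃
  set C := coshCenterDist r₂ r₃ Φ₁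
  have hA := cosh_mul_cosh_le_coshCenterDist hr₃ hr₁ hΦ₂
  have hB := cosh_mul_cosh_le_coshCenterDist hr₁ hr₂ hΦ₃
  have h₁ : 1 < cosh r₁ := by nlinarith [one_le_cosh r₁]
  have hA₁ : 1 < A := by nlinarith [one_le_cosh r₃]
  have hB₁ : 1 < B := by nlinarith [one_le_cosh r₂]
  have hC₁ : 1 ≤ C := one_le_coshCenterDist hr₂ hr₃ hΦ₁
  have hCAB : C * cosh r₁ ^ 2 ≤ 2 * (A * B) :=
    calc C * cosh r₁ ^ 2 ≤ 2 * (cosh r₂ * cosh r₃) * cosh r₁ ^ 2 := by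
          gcongr; exact coshCenterDist_le r₂ r₃ Φ₁
      _ = 2 * ((cosh r₃ * cosh r₁) * (cosh r₁ * cosh r₂)) := by ring
      _ ≤ 2 * (A * B) := by gcongr
  refine (vertexAngle_le_arccos (arcosh_pos hA₁) (arcosh_pos hB₁) ?_).trans ?_ <;>
    rw [cosh_arcosh hA₁.le, cosh_arcosh hB₁.le, cosh_arcosh hC₁]
  · nlinarith
  · refine arccos_le_arccos (sub_le_sub_left ?_ 1)
    rw [div_le_div_iff₀ (by positivity) (by positivity)]
    linarith

/-- Lemma 3.5: the inner angle at the first vertex of the hyperbolic triangle formed by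
the centers of three hyperbolic circles meeting at exterior angles in `[0, π/2]` tends
to `0`, uniformly in the weights and the other two radii, as the radius at that vertex
tends to infinity. -/
theorem hyperbolic_angle_small_of_large_radius :
    ∀ ε > 0, ∃ L > 0,
      ∀ Φ₁ Φ₂ Φ₃ : ℝ, Φ₁ ∈ Set.Icc 0 (π / 2) → Φ₂ ∈ Set.Icc 0 (π / 2) →
        Φ₃ ∈ Set.Icc 0 (π / 2) →
      ∀ r₁ r₂ r₃ : ℝ, 0 < r₁ → 0 < r₂ → 0 < r₃ → r₁ > L →
        Real.arccos
          ((Real.cosh (_root_.arcosh (Real.cosh r₃ * Real.cosh r₁ +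
              Real.sinh r₃ * Real.sinh r₁ * Real.cos Φ₂)) *
            Real.cosh (_root_.arcosh (Real.cosh r₁ * Real.cosh r₂ +
              Real.sinh r₁ * Real.sinh r₂ * Real.cos Φ₃)) -
            Real.cosh (_root_.arcosh (Real.cosh r₂ * Real.cosh r₃ +
              Real.sinh r₂ * Real.sinh r₃ * Real.cos Φ₁))) /
           (Real.sinh (_root_.arcosh (Real.cosh r₃ * Real.cosh r₁ +
              Real.sinh r₃ * Real.sinh r₁ * Real.cos Φ₂)) *
            Real.sinh (_root_.arcosh (Real.cosh r₁ * Real.cosh r₂ +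
              Real.sinh r₁ * Real.sinh r₂ * Real.cos Φ₃)))) < ε := by
  intro ε hε
  obtain ⟨L, hL⟩ := eventually_atTop.1
    ((tendsto_arccos_one_sub_two_div_cosh_sq.eventually (gt_mem_nhds hε)).and
      (((tendsto_pow_atTop two_ne_zero).comp tendsto_cosh_atTop).eventually_ge_atTop 2))
  refine ⟨max L 1, by positivity, fun Φ₁ Φ₂ Φ₃ hΦ₁ hΦ₂ hΦ₃ r₁ r₂ r₃ hr₁ hr₂ hr₃ hr₁L => ?_⟩
  obtain ⟨hsmall, hcosh⟩ := hL r₁ ((le_max_left L 1).trans hr₁L.le)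
  have hcos : ∀ Φ ∈ Set.Icc 0 (π / 2), 0 ≤ cos Φ := fun Φ hΦ =>
    cos_nonneg_of_mem_Icc ⟨by linarith [hΦ.1, pi_pos], hΦ.2⟩
  -- the statement's `arcosh` unfolds to Mathlib's `Real.arcosh`
  exact (vertexAngle_coshCenterDist_le hr₁.le hr₂.le hr₃.le (hcos Φ₁ hΦ₁) (hcos Φ₂ hΦ₂)
    (hcos Φ₃ hΦ₃) hcosh).trans_lt hsmall
end

section
/- Fix Φ₁, Φ₂, Φ₃ ∈ [0, π/2] and fix r₂, r₃ > 0. For r₁ > 0 define ℓ₁ = √(r₂² + r₃² + 2r₂r₃cos Φ₁), ℓ₂ = √(r₃² + r₁² + 2r₃r₁cos Φ₂), ℓ₃ = √(r₁² + r₂² + 2r₁r₂cos Φ₃), and θ₁ = arccos((ℓ₂² + ℓ₃² − ℓ₁²)/(2ℓ₂ℓ₃)). Then the limit of θ₁ as r₁ tends to 0 from the right equals π − Φ₁. -/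
open Real

/-- Degeneration limit (3) in the proof of Proposition 4.1 (Euclidean background
geometry): as the radius `r₁` shrinks to zero, the inner angle at the first vertex of
the Euclidean triangle formed by the centers of the three circles converges to
`π − Φ₁`, the complement of the weight of the opposite edge. -/
theorem euclidean_angle_limit_radius_to_zero
    (Φ₁ Φ₂ Φ₃ : ℝ)
    (hΦ₁ : Φ₁ ∈ Set.Icc 0 (π / 2)) (hΦ₂ : Φ₂ ∈ Set.Icc 0 (π / 2))
    (hΦ₃ : Φ₃ ∈ Set.Icc 0 (π / 2))
    (r₂ r₃ : ℝ) (hr₂ : 0 < r₂) (hr₃ : 0 < r₃) :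
    Filter.Tendsto
      (fun r₁ : ℝ =>
        Real.arccos
          (((Real.sqrt (r₃ ^ 2 + r₁ ^ 2 + 2 * r₃ * r₁ * Real.cos Φ₂)) ^ 2 +
            (Real.sqrt (r₁ ^ 2 + r₂ ^ 2 + 2 * r₁ * r₂ * Real.cos Φ₃)) ^ 2 -
            (Real.sqrt (r₂ ^ 2 + r₃ ^ 2 + 2 * r₂ * r₃ * Real.cos Φ₁)) ^ 2) /
           (2 * Real.sqrt (r₃ ^ 2 + r₁ ^ 2 + 2 * r₃ * r₁ * Real.cos Φ₂) *
              Real.sqrt (r₁ ^ 2 + r₂ ^ 2 + 2 * r₁ * r₂ * Real.cos Φ₃))))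
      (nhdsWithin 0 (Set.Ioi 0)) (nhds (π - Φ₁)) := by
  set f := (fun r₁ : ℝ =>
        Real.arccos
          (((Real.sqrt (r₃ ^ 2 + r₁ ^ 2 + 2 * r₃ * r₁ * Real.cos Φ₂)) ^ 2 +
            (Real.sqrt (r₁ ^ 2 + r₂ ^ 2 + 2 * r₁ * r₂ * Real.cos Φ₃)) ^ 2 -
            (Real.sqrt (r₂ ^ 2 + r₃ ^ 2 + 2 * r₂ * r₃ * Real.cos Φ₁)) ^ 2) /
           (2 * Real.sqrt (r₃ ^ 2 + r₁ ^ 2 + 2 * r₃ * r₁ * Real.cos Φ₂) *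
              Real.sqrt (r₁ ^ 2 + r₂ ^ 2 + 2 * r₁ * r₂ * Real.cos Φ₃)))) with hf
  have h2 : Real.sqrt (r₃ ^ 2 + (0:ℝ) ^ 2 + 2 * r₃ * 0 * Real.cos Φ₂) = r₃ := by
    simp [Real.sqrt_sq hr₃.le]
  have h3 : Real.sqrt ((0:ℝ) ^ 2 + r₂ ^ 2 + 2 * 0 * r₂ * Real.cos Φ₃) = r₂ := by
    simp [Real.sqrt_sq hr₂.le]
  have hval : f 0 = π - Φ₁ := by
    rw [hf]
    simp only [h2, h3]
    have h1 : Real.sqrt (r₂ ^ 2 + r₃ ^ 2 + 2 * r₂ * r₃ * Real.cos Φ₁) ^ 2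
        = r₂ ^ 2 + r₃ ^ 2 + 2 * r₂ * r₃ * Real.cos Φ₁ := by
      apply Real.sq_sqrt
      have hcos : 0 ≤ Real.cos Φ₁ :=
        Real.cos_nonneg_of_mem_Icc ⟨by linarith [hΦ₁.1, Real.pi_pos], hΦ₁.2⟩
      nlinarith [mul_nonneg (mul_nonneg (mul_pos hr₂ hr₃).le (by norm_num : (0:ℝ) ≤ 2)) hcos]
    rw [h1]
    have : (r₃ ^ 2 + r₂ ^ 2 - (r₂ ^ 2 + r₃ ^ 2 + 2 * r₂ * r₃ * Real.cos Φ₁)) /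
        (2 * r₃ * r₂) = -Real.cos Φ₁ := by
      field_simp
      ring
    rw [this, Real.arccos_neg, Real.arccos_cos hΦ₁.1 (hΦ₁.2.trans (by linarith [Real.pi_pos]))]
  rw [← hval]
  apply ContinuousAt.continuousWithinAt (f := f)
  rw [hf]
  apply Real.continuous_arccos.continuousAt.comp
  apply ContinuousAt.div
  · fun_prop
  · fun_prop
  · simp only [h2, h3]
    positivity
end

section
/- Fix Φ₁, Φ₂, Φ₃ ∈ [0, π/2] and fix r₃ > 0. For r₁, r₂ > 0 define ℓ₁ = √(r₂² + r₃² + 2r₂r₃cos Φ₁), ℓ₂ = √(r₃² + r₁² + 2r₃r₁cos Φ₂), ℓ₃ = √(r₁² + r₂² + 2r₁r₂cos Φ₃), and θ₁ = arccos((ℓ₂² + ℓ₃² − ℓ₁²)/(2ℓ₂ℓ₃)), θ₂ = arccos((ℓ₃² + ℓ₁² − ℓ₂²)/(2ℓ₃ℓ₁)). Then θ₁ + θ₂ tends to π as (r₁, r₂) tends to (0, 0) within the positive quadrant. -/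
open Real

lemma triangle_arccos_sum {x y z : ℝ} (hx : 0 < x) (hy : 0 < y) (hz : 0 < z)
    (h1 : x < y + z) (h2 : y < z + x) (h3 : z < x + y) :
    Real.arccos ((y^2+z^2-x^2)/(2*y*z)) + Real.arccos ((z^2+x^2-y^2)/(2*z*x))
      = π - Real.arccos ((x^2+y^2-z^2)/(2*x*y)) := by
  set a := (y^2+z^2-x^2)/(2*y*z) with ha
  set b := (z^2+x^2-y^2)/(2*z*x) with hb
  set c := (x^2+y^2-z^2)/(2*x*y) with hc
  have hyz : (0:ℝ) < 2*y*z := by positivity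
  have hzx : (0:ℝ) < 2*z*x := by positivity
  have hxy : (0:ℝ) < 2*x*y := by positivity
  have ha1 : -1 ≤ a := by rw [ha, le_div_iff₀ hyz]; nlinarith
  have ha2 : a < 1 := by rw [ha, div_lt_one hyz]; nlinarith
  have hb1 : -1 ≤ b := by rw [hb, le_div_iff₀ hzx]; nlinarith
  have hb2 : b < 1 := by rw [hb, div_lt_one hzx]; nlinarith
  have hc1 : -1 ≤ c := by rw [hc, le_div_iff₀ hxy]; nlinarith
  have hc2 : c ≤ 1 := by rw [hc, div_le_one hxy]; nlinarith
  have hab : -b < a := by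
    rw [ha, hb, neg_lt, ← neg_div, div_lt_div_iff₀ hyz hzx]
    nlinarith [mul_pos hz (mul_pos (mul_pos (show (0:ℝ) < x + y by linarith)
      (show (0:ℝ) < z + y - x by linarith)) (show (0:ℝ) < z + x - y by linarith)),
      mul_pos hy hz, mul_pos hz hx]
  have habc : 0 ≤ a*b + c := by
    have h : a*b + c = ((x+y+z)*(x+y-z)*(z+y-x)*(z+x-y))/(4*x*y*z^2) := by
      rw [ha, hb, hc]; field_simp; ring
    rw [h]
    have hnum : (0:ℝ) < (x+y+z)*(x+y-z)*(z+y-x)*(z+x-y) :=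
      mul_pos (mul_pos (mul_pos (by linarith) (by linarith)) (by linarith)) (by linarith)
    exact div_nonneg hnum.le (by positivity)
  have key : (1-a^2)*(1-b^2) = (a*b+c)^2 := by
    rw [ha, hb, hc]; field_simp; ring
  have hcosS : Real.cos (Real.arccos a + Real.arccos b) = -c := by
    rw [Real.cos_add, Real.cos_arccos ha1 ha2.le, Real.cos_arccos hb1 hb2.le,
      Real.sin_arccos, Real.sin_arccos,
      ← Real.sqrt_mul (by nlinarith : (0:ℝ) ≤ 1 - a^2), key, Real.sqrt_sq habc]
    ring
  have hSlt : Real.arccos a + Real.arccos b < π := by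
    have hmem : -b ∈ Set.Icc (-1:ℝ) 1 := ⟨by linarith, by linarith⟩
    have := Real.strictAntiOn_arccos hmem ⟨ha1, ha2.le⟩ hab
    rw [Real.arccos_neg] at this
    linarith
  have hS0 : 0 ≤ Real.arccos a + Real.arccos b :=
    add_nonneg (Real.arccos_nonneg a) (Real.arccos_nonneg b)
  have hc0 : 0 ≤ π - Real.arccos c := by linarith [Real.arccos_le_pi c]
  have hcπ : π - Real.arccos c ≤ π := by linarith [Real.arccos_nonneg c]
  refine Real.injOn_cos ⟨hS0, hSlt.le⟩ ⟨hc0, hcπ⟩ ?_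
  rw [hcosS, Real.cos_pi_sub, Real.cos_arccos hc1 hc2]

set_option maxHeartbeats 2000000 in
/-- Degeneration limit (2) in the proof of Proposition 4.1 (Euclidean background
geometry): as the radii `r₁, r₂` shrink to zero, the triangle degenerates to a segment
and the sum `θ₁ + θ₂` of the two angles at the shrinking vertices converges to `π`. -/
theorem euclidean_two_angles_limit
    (Φ₁ Φ₂ Φ₃ : ℝ)
    (hΦ₁ : Φ₁ ∈ Set.Icc 0 (π / 2)) (hΦ₂ : Φ₂ ∈ Set.Icc 0 (π / 2))
    (hΦ₃ : Φ₃ ∈ Set.Icc 0 (π / 2))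
    (r₃ : ℝ) (hr₃ : 0 < r₃) :
    Filter.Tendsto
      (fun p : ℝ × ℝ =>
        let r₁ := p.1
        let r₂ := p.2
        let ℓ₁ := Real.sqrt (r₂ ^ 2 + r₃ ^ 2 + 2 * r₂ * r₃ * Real.cos Φ₁)
        let ℓ₂ := Real.sqrt (r₃ ^ 2 + r₁ ^ 2 + 2 * r₃ * r₁ * Real.cos Φ₂)
        let ℓ₃ := Real.sqrt (r₁ ^ 2 + r₂ ^ 2 + 2 * r₁ * r₂ * Real.cos Φ₃)
        Real.arccos ((ℓ₂ ^ 2 + ℓ₃ ^ 2 - ℓ₁ ^ 2) / (2 * ℓ₂ * ℓ₃)) +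
          Real.arccos ((ℓ₃ ^ 2 + ℓ₁ ^ 2 - ℓ₂ ^ 2) / (2 * ℓ₃ * ℓ₁)))
      (nhdsWithin (0, 0) (Set.Ioi (0 : ℝ) ×ˢ Set.Ioi (0 : ℝ))) (nhds π) := by
  have hcΦ₁ : 0 ≤ Real.cos Φ₁ :=
    Real.cos_nonneg_of_mem_Icc ⟨by linarith [hΦ₁.1, Real.pi_pos], hΦ₁.2⟩
  have hcΦ₂ : 0 ≤ Real.cos Φ₂ :=
    Real.cos_nonneg_of_mem_Icc ⟨by linarith [hΦ₂.1, Real.pi_pos], hΦ₂.2⟩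
  have hcΦ₃ : 0 ≤ Real.cos Φ₃ :=
    Real.cos_nonneg_of_mem_Icc ⟨by linarith [hΦ₃.1, Real.pi_pos], hΦ₃.2⟩
  have hcΦ₁' : Real.cos Φ₁ ≤ 1 := Real.cos_le_one _
  have hcΦ₂' : Real.cos Φ₂ ≤ 1 := Real.cos_le_one _
  have hcΦ₃' : Real.cos Φ₃ ≤ 1 := Real.cos_le_one _
  set g : ℝ × ℝ → ℝ := fun p =>
    π - Real.arccos
      ((Real.sqrt (p.2 ^ 2 + r₃ ^ 2 + 2 * p.2 * r₃ * Real.cos Φ₁) ^ 2 +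
        Real.sqrt (r₃ ^ 2 + p.1 ^ 2 + 2 * r₃ * p.1 * Real.cos Φ₂) ^ 2 -
        Real.sqrt (p.1 ^ 2 + p.2 ^ 2 + 2 * p.1 * p.2 * Real.cos Φ₃) ^ 2) /
       (2 * Real.sqrt (p.2 ^ 2 + r₃ ^ 2 + 2 * p.2 * r₃ * Real.cos Φ₁) *
        Real.sqrt (r₃ ^ 2 + p.1 ^ 2 + 2 * r₃ * p.1 * Real.cos Φ₂))) with hg
  have hgt : Filter.Tendsto g
      (nhdsWithin (0, 0) (Set.Ioi (0 : ℝ) ×ˢ Set.Ioi (0 : ℝ))) (nhds π) := by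
    have hca : ContinuousAt g ((0:ℝ), (0:ℝ)) := by
      rw [hg]
      have h1 : Real.sqrt ((0:ℝ) ^ 2 + r₃ ^ 2 + 2 * 0 * r₃ * Real.cos Φ₁) = r₃ := by
        simp [Real.sqrt_sq hr₃.le]
      have h2 : Real.sqrt (r₃ ^ 2 + (0:ℝ) ^ 2 + 2 * r₃ * 0 * Real.cos Φ₂) = r₃ := by
        simp [Real.sqrt_sq hr₃.le]
      have hnum : ContinuousAt (fun p : ℝ × ℝ =>
          Real.sqrt (p.2 ^ 2 + r₃ ^ 2 + 2 * p.2 * r₃ * Real.cos Φ₁) ^ 2 +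
          Real.sqrt (r₃ ^ 2 + p.1 ^ 2 + 2 * r₃ * p.1 * Real.cos Φ₂) ^ 2 -
          Real.sqrt (p.1 ^ 2 + p.2 ^ 2 + 2 * p.1 * p.2 * Real.cos Φ₃) ^ 2) ((0:ℝ), (0:ℝ)) := by
        fun_prop
      have hdenc : ContinuousAt (fun p : ℝ × ℝ =>
          2 * Real.sqrt (p.2 ^ 2 + r₃ ^ 2 + 2 * p.2 * r₃ * Real.cos Φ₁) *
          Real.sqrt (r₃ ^ 2 + p.1 ^ 2 + 2 * r₃ * p.1 * Real.cos Φ₂)) ((0:ℝ), (0:ℝ)) := by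
        fun_prop
      have hden : (2 * Real.sqrt (((0:ℝ), (0:ℝ)).2 ^ 2 + r₃ ^ 2 + 2 * ((0:ℝ), (0:ℝ)).2 * r₃ * Real.cos Φ₁) *
          Real.sqrt (r₃ ^ 2 + ((0:ℝ), (0:ℝ)).1 ^ 2 + 2 * r₃ * ((0:ℝ), (0:ℝ)).1 * Real.cos Φ₂)) ≠ 0 := by
        simp only [h1, h2]
        positivity
      exact continuousAt_const.sub
        (Real.continuous_arccos.continuousAt.comp (hnum.div hdenc hden))
    have hval : g ((0:ℝ), (0:ℝ)) = π := by
      rw [hg]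
      have h1 : Real.sqrt ((0:ℝ) ^ 2 + r₃ ^ 2 + 2 * 0 * r₃ * Real.cos Φ₁) = r₃ := by
        simp [Real.sqrt_sq hr₃.le]
      have h2 : Real.sqrt (r₃ ^ 2 + (0:ℝ) ^ 2 + 2 * r₃ * 0 * Real.cos Φ₂) = r₃ := by
        simp [Real.sqrt_sq hr₃.le]
      have h3 : Real.sqrt ((0:ℝ) ^ 2 + (0:ℝ) ^ 2 + 2 * 0 * 0 * Real.cos Φ₃) = 0 := by
        simp
      simp only [h1, h2, h3]
      have : (r₃ ^ 2 + r₃ ^ 2 - (0:ℝ) ^ 2) / (2 * r₃ * r₃) = 1 := by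
        field_simp; ring
      rw [this, Real.arccos_one, sub_zero]
    have := hca.tendsto
    rw [hval] at this
    exact this.mono_left nhdsWithin_le_nhds
  refine hgt.congr' ?_
  filter_upwards [self_mem_nhdsWithin] with p hp
  obtain ⟨hp1, hp2⟩ := hp
  simp only [Set.mem_Ioi] at hp1 hp2
  set r₁ := p.1
  set r₂ := p.2
  set E₁ := r₂ ^ 2 + r₃ ^ 2 + 2 * r₂ * r₃ * Real.cos Φ₁ with hE₁
  set E₂ := r₃ ^ 2 + r₁ ^ 2 + 2 * r₃ * r₁ * Real.cos Φ₂ with hE₂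
  set E₃ := r₁ ^ 2 + r₂ ^ 2 + 2 * r₁ * r₂ * Real.cos Φ₃ with hE₃
  have hE₁0 : 0 < E₁ := by positivity
  have hE₂0 : 0 < E₂ := by positivity
  have hE₃0 : 0 < E₃ := by positivity
  have hl₁ : 0 < Real.sqrt E₁ := Real.sqrt_pos.2 hE₁0
  have hl₂ : 0 < Real.sqrt E₂ := Real.sqrt_pos.2 hE₂0
  have hl₃ : 0 < Real.sqrt E₃ := Real.sqrt_pos.2 hE₃0
  have hs₁ : Real.sqrt E₁ ^ 2 = E₁ := Real.sq_sqrt hE₁0.le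
  have hs₂ : Real.sqrt E₂ ^ 2 = E₂ := Real.sq_sqrt hE₂0.le
  have hs₃ : Real.sqrt E₃ ^ 2 = E₃ := Real.sq_sqrt hE₃0.le
  -- upper bounds ℓᵢ ≤ rⱼ + rₖ
  have hub₁ : Real.sqrt E₁ ≤ r₂ + r₃ := by
    rw [show r₂ + r₃ = Real.sqrt ((r₂ + r₃)^2) from (Real.sqrt_sq (by positivity)).symm]
    apply Real.sqrt_le_sqrt; rw [hE₁]; nlinarith [mul_nonneg (mul_nonneg hp2.le hr₃.le) (sub_nonneg.2 hcΦ₁')]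
  have hub₂ : Real.sqrt E₂ ≤ r₃ + r₁ := by
    rw [show r₃ + r₁ = Real.sqrt ((r₃ + r₁)^2) from (Real.sqrt_sq (by positivity)).symm]
    apply Real.sqrt_le_sqrt; rw [hE₂]; nlinarith [mul_nonneg (mul_nonneg hr₃.le hp1.le) (sub_nonneg.2 hcΦ₂')]
  have hub₃ : Real.sqrt E₃ ≤ r₁ + r₂ := by
    rw [show r₁ + r₂ = Real.sqrt ((r₁ + r₂)^2) from (Real.sqrt_sq (by positivity)).symm]
    apply Real.sqrt_le_sqrt; rw [hE₃]; nlinarith [mul_nonneg (mul_nonneg hp1.le hp2.le) (sub_nonneg.2 hcΦ₃')]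
  -- strict lower bounds
  have hlb : ∀ u v : ℝ, 0 ≤ u → u ^ 2 < v → u < Real.sqrt v := by
    intro u v hu huv
    have := Real.sqrt_lt_sqrt (by positivity) huv
    rwa [Real.sqrt_sq hu] at this
  have hl₁r₃ : r₃ < Real.sqrt E₁ := hlb _ _ hr₃.le (by rw [hE₁]; nlinarith [mul_nonneg (mul_nonneg hp2.le hr₃.le) hcΦ₁, sq_nonneg r₂, mul_pos hp2 hp2])
  have hl₁r₂ : r₂ < Real.sqrt E₁ := hlb _ _ hp2.le (by rw [hE₁]; nlinarith [mul_nonneg (mul_nonneg hp2.le hr₃.le) hcΦ₁, mul_pos hr₃ hr₃])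
  have hl₂r₃ : r₃ < Real.sqrt E₂ := hlb _ _ hr₃.le (by rw [hE₂]; nlinarith [mul_nonneg (mul_nonneg hr₃.le hp1.le) hcΦ₂, mul_pos hp1 hp1])
  have hl₂r₁ : r₁ < Real.sqrt E₂ := hlb _ _ hp1.le (by rw [hE₂]; nlinarith [mul_nonneg (mul_nonneg hr₃.le hp1.le) hcΦ₂, mul_pos hr₃ hr₃])
  have hl₃r₁ : r₁ < Real.sqrt E₃ := hlb _ _ hp1.le (by rw [hE₃]; nlinarith [mul_nonneg (mul_nonneg hp1.le hp2.le) hcΦ₃, mul_pos hp2 hp2])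
  have hl₃r₂ : r₂ < Real.sqrt E₃ := hlb _ _ hp2.le (by rw [hE₃]; nlinarith [mul_nonneg (mul_nonneg hp1.le hp2.le) hcΦ₃, mul_pos hp1 hp1])
  have h1 : Real.sqrt E₁ < Real.sqrt E₂ + Real.sqrt E₃ := by linarith
  have h2 : Real.sqrt E₂ < Real.sqrt E₃ + Real.sqrt E₁ := by linarith
  have h3 : Real.sqrt E₃ < Real.sqrt E₁ + Real.sqrt E₂ := by linarith
  have := triangle_arccos_sum hl₁ hl₂ hl₃ h1 h2 h3
  exact this.symm
end

section
/- Let N ≥ 1, let T > 0, and let K : ℝ → (Fin N → ℝ) be differentiable on [0, T]. Suppose there are continuous functions C : ℝ → Fin N → Fin N → ℝ with C t i j ≥ 0 for all t ∈ [0, T] and all i, j, such that for all t ∈ [0, T] and all i, the derivative satisfies (K i)'(t) = ∑_j C t i j · (K j t − K i t). Then the function M(t) = max_i K i t is nonincreasing on [0, T] and the function m(t) = min_i K i t is nondecreasing on [0, T]. -/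
open Filter Set Topology

/-!
At a time where the curvature `K i` is maximal, every term `C i j (K j - K i)` is nonpositive,
so `K i` is not increasing there. Hence the lower right Dini derivative of the maximum
`M = max_i K i` is nonpositive everywhere, and a continuous function with nonpositive lower
right Dini derivative is antitone. The minimum is handled by applying this to `-K`.
-/

namespace Finset

variable {ι : Type*}

theorem sup'_neg_eq_neg_inf' {s : Finset ι} (hs : s.Nonempty) (f : ι → ℝ) :
    s.sup' hs (fun i => -f i) = -s.inf' hs f := by
  refine le_antisymm (sup'_le_iff hs _ |>.2 fun i hi => neg_le_neg (inf'_le f hi)) ?_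
  obtain ⟨i, hi, hinf⟩ := exists_mem_eq_inf' hs f
  exact hinf ▸ le_sup' (fun j => -f j) hi

theorem sum_mul_sub_nonpos_of_le {s : Finset ι} {c v : ι → ℝ} {i : ι}
    (hc : ∀ j ∈ s, 0 ≤ c j) (hv : ∀ j ∈ s, v j ≤ v i) :
    ∑ j ∈ s, c j * (v j - v i) ≤ 0 :=
  sum_nonpos fun j hj => mul_nonpos_of_nonneg_of_nonpos (hc j hj) (sub_nonpos.2 (hv j hj))

theorem sum_mul_sub_nonneg_of_le {s : Finset ι} {c v : ι → ℝ} {i : ι}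
    (hc : ∀ j ∈ s, 0 ≤ c j) (hv : ∀ j ∈ s, v i ≤ v j) :
    0 ≤ ∑ j ∈ s, c j * (v j - v i) :=
  sum_nonneg fun j hj => mul_nonneg (hc j hj) (sub_nonneg.2 (hv j hj))

end Finset

section MaximumPrinciple

variable {ι : Type*} {s : Finset ι} (hs : s.Nonempty) {f : ι → ℝ → ℝ}

/-- The lower right Dini derivative of a finite maximum is at most the right derivative of
some function attaining the maximum. -/
theorem frequently_slope_sup'_lt {f' : ι → ℝ} {x B r : ℝ}
    (hf : ∀ i ∈ s, HasDerivWithinAt (f i) (f' i) (Ioi x) x)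
    (hB : ∀ i ∈ s, f i x = s.sup' hs (fun j => f j x) → f' i ≤ B) (hr : B < r) :
    ∃ᶠ z in 𝓝[>] x, slope (fun t => s.sup' hs fun j => f j t) x z < r := by
  set M : ℝ → ℝ := fun t => s.sup' hs fun j => f j t
  obtain ⟨i, hi, hfreq⟩ : ∃ i ∈ s, ∃ᶠ z in 𝓝[>] x, M z = f i z := by
    rw [← Finset.frequently_exists]
    refine (Eventually.of_forall fun z => ?_).frequently
    exact Finset.exists_mem_eq_sup' hs fun j => f j z
  -- Along the points where `f i` is the maximum, `M` and `f i` agree, hence so do their slopes.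
  set L := 𝓝[>] x ⊓ 𝓟 {z | M z = f i z}
  have : L.NeBot := frequently_iff_neBot.1 hfreq
  have hL : L ≤ 𝓝[>] x := inf_le_left
  have hML : ∀ᶠ z in L, M z = f i z := mem_inf_of_right (mem_principal_self _)
  have hMx : M x = f i x := by
    have hcont : ContinuousWithinAt M (Ioi x) x :=
      ContinuousWithinAt.finset_sup'_apply hs fun j hj => (hf j hj).continuousWithinAt
    exact tendsto_nhds_unique ((hcont.tendsto.mono_left hL).congr' hML)
      ((hf i hi).continuousWithinAt.tendsto.mono_left hL)
  have hslope : Tendsto (slope M x) L (𝓝 (f' i)) := by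
    refine ((hasDerivWithinAt_iff_tendsto_slope.1 (hf i hi)).mono_left ?_).congr' ?_
    · exact hL.trans (nhdsWithin_mono x fun z hz => ⟨hz, ne_of_gt hz⟩)
    · filter_upwards [hML] with z hz
      simp only [slope_def_field, hz, hMx]
  have hlt : f' i < r := (hB i hi hMx.symm).trans_lt hr
  exact ((hslope.eventually (gt_mem_nhds hlt)).frequently).filter_mono hL

theorem antitoneOn_sup'_of_hasDerivWithinAt {f' : ι → ℝ → ℝ} {a b : ℝ}
    (hcont : ∀ i ∈ s, ContinuousOn (f i) (Icc a b))
    (hf : ∀ i ∈ s, ∀ x ∈ Ico a b, HasDerivWithinAt (f i) (f' i x) (Ioi x) x)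
    (hf' : ∀ i ∈ s, ∀ x ∈ Ico a b, f i x = s.sup' hs (fun j => f j x) → f' i x ≤ 0) :
    AntitoneOn (fun t => s.sup' hs fun i => f i t) (Icc a b) := by
  intro u hu v hv huv
  have hsub : Icc u v ⊆ Icc a b := Icc_subset_Icc hu.1 hv.2
  have hsub' : Ico u v ⊆ Ico a b := Ico_subset_Ico hu.1 hv.2
  refine image_le_of_liminf_slope_right_le_deriv_boundary
    (ContinuousOn.finset_sup'_apply hs fun i hi => (hcont i hi).mono hsub) le_rfl
    continuousOn_const (B' := fun _ => 0) (fun x _ => hasDerivWithinAt_const x _ _)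
    (fun x hx r hr => frequently_slope_sup'_lt hs (fun i hi => hf i hi x (hsub' hx))
      (fun i hi => hf' i hi x (hsub' hx)) hr) ⟨huv, le_rfl⟩

theorem monotoneOn_inf'_of_hasDerivWithinAt {f' : ι → ℝ → ℝ} {a b : ℝ}
    (hcont : ∀ i ∈ s, ContinuousOn (f i) (Icc a b))
    (hf : ∀ i ∈ s, ∀ x ∈ Ico a b, HasDerivWithinAt (f i) (f' i x) (Ioi x) x)
    (hf' : ∀ i ∈ s, ∀ x ∈ Ico a b, f i x = s.inf' hs (fun j => f j x) → 0 ≤ f' i x) :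
    MonotoneOn (fun t => s.inf' hs fun i => f i t) (Icc a b) := by
  have hneg := antitoneOn_sup'_of_hasDerivWithinAt hs (f := fun i t => -f i t)
    (f' := fun i x => -f' i x) (fun i hi => (hcont i hi).neg) (fun i hi x hx => (hf i hi x hx).neg)
    (fun i hi x hx hmax => by
      rw [Finset.sup'_neg_eq_neg_inf', neg_inj] at hmax
      exact neg_nonpos.2 (hf' i hi x hx hmax))
  intro u hu v hv huv
  simpa only [Finset.sup'_neg_eq_neg_inf', neg_le_neg_iff] using hneg hu hv huv

end MaximumPrinciple

theorem combinatorial_maximum_principle_euclidean_general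
    (N : ℕ) (hN : 0 < N) (T : ℝ)
    (K : ℝ → Fin N → ℝ) (C : ℝ → Fin N → Fin N → ℝ)
    (hCnonneg : ∀ t ∈ Set.Icc (0 : ℝ) T, ∀ i j, 0 ≤ C t i j)
    (hODE : ∀ i, ∀ t ∈ Set.Icc (0 : ℝ) T,
      HasDerivAt (fun s => K s i) (∑ j, C t i j * (K t j - K t i)) t) :
    AntitoneOn
      (fun t => Finset.univ.sup'
        (Finset.univ_nonempty_iff.mpr (Fin.pos_iff_nonempty.mp hN)) (fun i => K t i))
      (Set.Icc 0 T) ∧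
    MonotoneOn
      (fun t => Finset.univ.inf'
        (Finset.univ_nonempty_iff.mpr (Fin.pos_iff_nonempty.mp hN)) (fun i => K t i))
      (Set.Icc 0 T) := by
  have hne : (Finset.univ : Finset (Fin N)).Nonempty :=
    Finset.univ_nonempty_iff.mpr (Fin.pos_iff_nonempty.mp hN)
  have hcont : ∀ i ∈ Finset.univ, ContinuousOn (fun t => K t i) (Set.Icc 0 T) :=
    fun i _ t ht => (hODE i t ht).continuousAt.continuousWithinAt
  have hderiv : ∀ i ∈ Finset.univ, ∀ t ∈ Set.Ico 0 T, HasDerivWithinAt (fun s => K s i)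
      (∑ j, C t i j * (K t j - K t i)) (Set.Ioi t) t :=
    fun i _ t ht => (hODE i t (Set.Ico_subset_Icc_self ht)).hasDerivWithinAt
  refine ⟨antitoneOn_sup'_of_hasDerivWithinAt hne hcont hderiv ?_,
    monotoneOn_inf'_of_hasDerivWithinAt hne hcont hderiv ?_⟩
  · intro i _ t ht hmax
    exact Finset.sum_mul_sub_nonpos_of_le (fun j _ => hCnonneg t (Set.Ico_subset_Icc_self ht) i j)
      fun j _ => hmax ▸ Finset.le_sup' (fun k => K t k) (Finset.mem_univ j)
  · intro i _ t ht hmin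
    exact Finset.sum_mul_sub_nonneg_of_le (fun j _ => hCnonneg t (Set.Ico_subset_Icc_self ht) i j)
      fun j _ => hmin ▸ Finset.inf'_le (fun k => K t k) (Finset.mem_univ j)

/-- The maximum principle for the combinatorial curvature evolution
(Corollary 3.3 (1), Euclidean background geometry): if the curvatures `K i` evolve by
`(K i)' = ∑ j, C i j (K j − K i)` with nonnegative continuous coefficients, then the
maximal curvature is nonincreasing and the minimal curvature is nondecreasing on
`[0, T]`. -/
theorem combinatorial_maximum_principle_euclidean
    (N : ℕ) (hN : 0 < N) (T : ℝ) (hT : 0 < T)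
    (K : ℝ → Fin N → ℝ) (C : ℝ → Fin N → Fin N → ℝ)
    (hCcont : ∀ i j, Continuous fun t => C t i j)
    (hCnonneg : ∀ t ∈ Set.Icc (0 : ℝ) T, ∀ i j, 0 ≤ C t i j)
    (hODE : ∀ i, ∀ t ∈ Set.Icc (0 : ℝ) T,
      HasDerivAt (fun s => K s i) (∑ j, C t i j * (K t j - K t i)) t) :
    AntitoneOn
      (fun t => Finset.univ.sup'
        (Finset.univ_nonempty_iff.mpr (Fin.pos_iff_nonempty.mp hN)) (fun i => K t i))
      (Set.Icc 0 T) ∧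
    MonotoneOn
      (fun t => Finset.univ.inf'
        (Finset.univ_nonempty_iff.mpr (Fin.pos_iff_nonempty.mp hN)) (fun i => K t i))
      (Set.Icc 0 T) :=
  combinatorial_maximum_principle_euclidean_general N hN T K C hCnonneg hODE
end

section
/- Let N ≥ 1, let T > 0, and let K : ℝ → (Fin N → ℝ) be differentiable on [0, T]. Suppose there are continuous functions C : ℝ → Fin N → Fin N → ℝ and B : ℝ → Fin N → ℝ with C t i j ≥ 0 and B t i ≥ 0 for all t ∈ [0, T] and all i, j, such that for all t ∈ [0, T] and all i, the derivative satisfies (K i)'(t) = ∑_j C t i j · (K j t − K i t) − B t i · K i t. Then the function t ↦ max(max_i K i t, 0) is nonincreasing on [0, T] and the function t ↦ min(min_i K i t, 0) is nondecreasing on [0, T]. -/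
open Set Filter
open scoped Topology

private lemma finset_sup'_neg_eq {ι : Type*} (s : Finset ι) (hs : s.Nonempty) (f : ι → ℝ) :
    s.sup' hs (fun i => -f i) = - s.inf' hs f := by
  apply le_antisymm
  · exact Finset.sup'_le _ _ fun i hi => neg_le_neg (Finset.inf'_le _ hi)
  · rw [neg_le]
    exact Finset.le_inf' _ _ fun i hi => by
      rw [neg_le]; exact Finset.le_sup' (fun i => -f i) hi

/-- The maximum principle: the positive part of the max curvature is nonincreasing. -/
private lemma max_principle
    (N : ℕ) (T : ℝ)
    (K : ℝ → Fin N → ℝ) (C : ℝ → Fin N → Fin N → ℝ) (B : ℝ → Fin N → ℝ)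
    (hCnonneg : ∀ t ∈ Set.Icc (0 : ℝ) T, ∀ i j, 0 ≤ C t i j)
    (hBnonneg : ∀ t ∈ Set.Icc (0 : ℝ) T, ∀ i, 0 ≤ B t i)
    (hODE : ∀ i, ∀ t ∈ Set.Icc (0 : ℝ) T,
      HasDerivAt (fun s => K s i)
        ((∑ j, C t i j * (K t j - K t i)) - B t i * K t i) t)
    (hne : (Finset.univ : Finset (Fin N)).Nonempty) :
    AntitoneOn (fun t => max (Finset.univ.sup' hne (fun i => K t i)) 0) (Set.Icc 0 T) := by
  set f : ℝ → ℝ := fun t => max (Finset.univ.sup' hne (fun i => K t i)) 0 with hf_def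
  have hKc : ∀ i, ∀ x ∈ Set.Icc (0 : ℝ) T, ContinuousAt (fun z => K z i) x :=
    fun i x hx => (hODE i x hx).continuousAt
  have hKle : ∀ x i, K x i ≤ f x := fun x i =>
    le_trans (Finset.le_sup' (fun i => K x i) (Finset.mem_univ i)) (le_max_left _ _)
  have hf0 : ∀ x, 0 ≤ f x := fun x => le_max_right _ _
  intro s hs t ht hst
  -- the key estimate: for every ε > 0, f t ≤ f s + ε * (t - s)
  have key : ∀ ε : ℝ, 0 < ε → f t ≤ f s + ε * (t - s) := by
    intro ε hε
    have hsub : Set.Icc s t ⊆ Set.Icc (0 : ℝ) T := Set.Icc_subset_Icc hs.1 ht.2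
    have hsupc : ContinuousOn (fun z => Finset.univ.sup' hne (fun i => K z i)) (Set.Icc s t) :=
      ContinuousOn.finset_sup'_apply hne fun i _ x hx => (hKc i x (hsub hx)).continuousWithinAt
    have hfc : ContinuousOn f (Set.Icc s t) := hsupc.sup' continuousOn_const
    have main := image_le_of_liminf_slope_right_lt_deriv_boundary'
      (f := f) (f' := fun _ => (0 : ℝ)) (a := s) (b := t) hfc
      (B := fun x => f s + ε * (x - s)) (B' := fun _ => ε)
      ?hf' ?ha ?hB ?hB' ?bound ⟨hst, le_rfl⟩
    · simpa using main
    case ha => simp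
    case hB =>
      exact continuousOn_const.add (continuousOn_const.mul
        (continuousOn_id.sub continuousOn_const))
    case hB' =>
      intro x _
      have : HasDerivAt (fun x => f s + ε * (x - s)) (ε * 1) x :=
        (((hasDerivAt_id x).sub_const s).const_mul ε).const_add (f s)
      simpa using this.hasDerivWithinAt
    case bound => exact fun x _ _ => hε
    case hf' =>
      intro x hx r hr
      have hr0 : (0 : ℝ) < r := hr
      have hx0T : x ∈ Set.Icc (0 : ℝ) T := ⟨hs.1.trans hx.1, hx.2.le.trans ht.2⟩
      have hr2 : (0 : ℝ) < r / 2 := by linarith [hr0]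
      -- each coordinate eventually lies below the linear barrier with slope r/2
      have keyj : ∀ j : Fin N, ∀ᶠ z in 𝓝[>] x, K z j ≤ f x + (r / 2) * (z - x) := by
        intro j
        by_cases hj : K x j < f x
        · have h1 : ∀ᶠ z in 𝓝 x, K z j < f x :=
            ((hKc j x hx0T).eventually_lt continuousAt_const hj)
          filter_upwards [nhdsWithin_le_nhds h1, self_mem_nhdsWithin] with z hz1 hz2
          have : (0 : ℝ) ≤ (r / 2) * (z - x) :=
            mul_nonneg hr2.le (by simp only [Set.mem_Ioi] at hz2; linarith)
          linarith
        · have hj' : K x j = f x := le_antisymm (hKle x j) (not_lt.1 hj)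
          -- the derivative at a nonnegative maximum point is nonpositive
          have hd : (∑ l, C x j l * (K x l - K x j)) - B x j * K x j ≤ 0 := by
            have h1 : ∀ l ∈ Finset.univ, C x j l * (K x l - K x j) ≤ 0 := by
              intro l _
              have h2 : K x l - K x j ≤ 0 := by
                have := hKle x l; rw [hj']; linarith
              have := mul_le_mul_of_nonneg_left h2 (hCnonneg x hx0T j l)
              simpa using this
            have hsum : (∑ l, C x j l * (K x l - K x j)) ≤ 0 := Finset.sum_nonpos h1
            have hBK : 0 ≤ B x j * K x j :=
              mul_nonneg (hBnonneg x hx0T j) (by rw [hj']; exact hf0 x)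
            linarith
          have hder := hODE j x hx0T
          rw [hasDerivAt_iff_tendsto_slope] at hder
          have hder' : Tendsto (slope (fun z => K z j) x) (𝓝[>] x)
              (𝓝 ((∑ l, C x j l * (K x l - K x j)) - B x j * K x j)) :=
            hder.mono_left (nhdsWithin_mono x fun z hz => ne_of_gt hz)
          have hev : ∀ᶠ z in 𝓝[>] x, slope (fun z => K z j) x z < r / 2 :=
            hder'.eventually_lt_const (lt_of_le_of_lt hd hr2)
          filter_upwards [hev, self_mem_nhdsWithin] with z hz1 hz2
          simp only [Set.mem_Ioi] at hz2
          rw [slope_def_field, div_lt_iff₀ (by linarith : (0:ℝ) < z - x)] at hz1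
          rw [hj'] at hz1
          linarith
      have keyall : ∀ᶠ z in 𝓝[>] x, ∀ j, K z j ≤ f x + (r / 2) * (z - x) :=
        eventually_all.mpr keyj
      have hfin : ∀ᶠ z in 𝓝[>] x, slope f x z < r := by
        filter_upwards [keyall, self_mem_nhdsWithin] with z hz1 hz2
        simp only [Set.mem_Ioi] at hz2
        have hzx : (0 : ℝ) < z - x := by linarith
        have hfz : f z ≤ f x + (r / 2) * (z - x) := by
          apply max_le
          · exact Finset.sup'_le _ _ fun j _ => hz1 j
          · have := mul_nonneg hr2.le hzx.le
            have := hf0 x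
            linarith
        rw [slope_def_field, div_lt_iff₀ hzx]
        nlinarith
      exact hfin.frequently
  -- pass to the limit ε → 0
  rcases eq_or_lt_of_le hst with h | h
  · rw [h]
  · by_contra hcon
    push_neg at hcon
    have hts : (0 : ℝ) < t - s := by linarith
    have := key ((f t - f s) / (2 * (t - s))) (div_pos (by linarith) (by linarith))
    rw [div_mul_eq_mul_div, mul_comm] at this
    have h2 : (t - s) * (f t - f s) / (2 * (t - s)) = (f t - f s) / 2 := by
      field_simp
    rw [h2] at this
    linarith

/-- The maximum principle for the combinatorial curvature evolution
(Corollary 3.3 (2), hyperbolic background geometry): if the curvatures `K i` evolve by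
`(K i)' = ∑ j, C i j (K j − K i) − B i · K i` with nonnegative continuous coefficients,
then the positive part of the maximal curvature is nonincreasing and the negative part
of the minimal curvature is nondecreasing on `[0, T]`. -/
theorem combinatorial_maximum_principle_hyperbolic
    (N : ℕ) (hN : 0 < N) (T : ℝ) (hT : 0 < T)
    (K : ℝ → Fin N → ℝ) (C : ℝ → Fin N → Fin N → ℝ) (B : ℝ → Fin N → ℝ)
    (hCcont : ∀ i j, Continuous fun t => C t i j)
    (hBcont : ∀ i, Continuous fun t => B t i)
    (hCnonneg : ∀ t ∈ Set.Icc (0 : ℝ) T, ∀ i j, 0 ≤ C t i j)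
    (hBnonneg : ∀ t ∈ Set.Icc (0 : ℝ) T, ∀ i, 0 ≤ B t i)
    (hODE : ∀ i, ∀ t ∈ Set.Icc (0 : ℝ) T,
      HasDerivAt (fun s => K s i)
        ((∑ j, C t i j * (K t j - K t i)) - B t i * K t i) t) :
    AntitoneOn
      (fun t => max (Finset.univ.sup'
        (Finset.univ_nonempty_iff.mpr (Fin.pos_iff_nonempty.mp hN)) (fun i => K t i)) 0)
      (Set.Icc 0 T) ∧
    MonotoneOn
      (fun t => min (Finset.univ.inf'
        (Finset.univ_nonempty_iff.mpr (Fin.pos_iff_nonempty.mp hN)) (fun i => K t i)) 0)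
      (Set.Icc 0 T) := by
  have hne : (Finset.univ : Finset (Fin N)).Nonempty :=
    Finset.univ_nonempty_iff.mpr (Fin.pos_iff_nonempty.mp hN)
  constructor
  · exact max_principle N T K C B hCnonneg hBnonneg hODE hne
  · -- apply the max principle to -K
    have hODE' : ∀ i, ∀ t ∈ Set.Icc (0 : ℝ) T,
        HasDerivAt (fun s => -K s i)
          ((∑ j, C t i j * (-K t j - -K t i)) - B t i * -K t i) t := by
      intro i t ht
      have := (hODE i t ht).neg
      have heq : (∑ j, C t i j * (-K t j - -K t i)) - B t i * -K t i
          = -((∑ j, C t i j * (K t j - K t i)) - B t i * K t i) := by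
        have h1 : ∀ j ∈ Finset.univ, C t i j * (-K t j - -K t i)
            = -(C t i j * (K t j - K t i)) := fun j _ => by ring
        rw [Finset.sum_congr rfl h1, Finset.sum_neg_distrib]; ring
      rw [heq]; exact this
    have A := max_principle N T (fun t i => -K t i) C B hCnonneg hBnonneg hODE' hne
    intro a ha b hb hab
    have h := A ha hb hab
    simp only [finset_sup'_neg_eq] at h
    have hmax : ∀ v : ℝ, max (-v) 0 = -(min v 0) := fun v => by
      rw [← neg_zero, max_neg_neg, neg_zero]
    rw [hmax, hmax] at h
    exact neg_le_neg_iff.mp h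
end
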